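/- Let m, k ∈ ℕ with mk ≥ 2, let A be a nonempty index set, and for each α ∈ A let ν_α > 0 and p_α, θ_α, p̃_α, θ̃_α ∈ [1,∞] satisfy |1/p_α − 1/p̃_α| < log 2 / log(mk) and |1/θ_α − 1/θ̃_α| < log 2 / log(mk). Set M = ⋂_{α∈A} ν_α B^{m,k}_{p_α,θ_α} and M̃ = ⋂_{α∈A} ν_α B^{m,k}_{p̃_α,θ̃_α}. Then (1/2) M ⊂ M̃ ⊂ 2 M. -/

import Mathlib

open scoped ENNReal NNReal BigOperators Pointwise

noncomputable section

def lNorm (s : ℝ≥0∞) {ι : Type*} [Fintype ι] (x : ι → ℝ) : ℝ :=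
  if s = ∞ then ⨆ i, |x i| else (∑ i, |x i| ^ s.toReal) ^ (1 / s.toReal)

def mixedNorm (p θ : ℝ≥0∞) {m k : ℕ} (x : Fin m → Fin k → ℝ) : ℝ :=
  lNorm θ fun j => lNorm p fun i => x i j

def mixedBall (m k : ℕ) (p θ : ℝ≥0∞) : Set (Fin m → Fin k → ℝ) :=
  {x | mixedNorm p θ x ≤ 1}

def kolWidth (m k n : ℕ) (M : Set (Fin m → Fin k → ℝ)) (q σ : ℝ≥0∞) : ℝ :=
  ⨅ L : {L : Submodule ℝ (Fin m → Fin k → ℝ) // Module.finrank ℝ L ≤ n},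
    ⨆ x : M, ⨅ y : L.1,
      mixedNorm q σ ((x : Fin m → Fin k → ℝ) - (y : Fin m → Fin k → ℝ))

def ir (p : ℝ≥0∞) : ℝ := p⁻¹.toReal

def omegaE (p q : ℝ≥0∞) : ℝ :=
  if q = 2 then 1 else min ((ir p - ir q) / (1 / 2 - ir q)) 1

def expOf (t : ℝ) : ℝ≥0∞ := (ENNReal.ofReal t)⁻¹

def Phi (q σ : ℝ≥0∞) (m k n : ℕ) (p θ : ℝ≥0∞) : ℝ≥0∞ :=
  let M : ℝ≥0∞ := m
  let K : ℝ≥0∞ := k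
  let W : ℝ≥0∞ := ((n : ℝ≥0∞))⁻¹ ^ ((1 : ℝ) / 2) * M ^ ir q * K ^ ir σ
  let Wm : ℝ≥0∞ := ((n : ℝ≥0∞))⁻¹ ^ ((1 : ℝ) / 2) * M ^ ((1 : ℝ) / 2) * K ^ ir σ
  let Wk : ℝ≥0∞ := ((n : ℝ≥0∞))⁻¹ ^ ((1 : ℝ) / 2) * M ^ ir q * K ^ ((1 : ℝ) / 2)
  if q ≤ p then
    if σ ≤ θ then
      M ^ (ir q - ir p) * K ^ (ir σ - ir θ)
    else
      min (M ^ (ir q - ir p)) (M ^ (ir q - ir p) * Wm ^ omegaE θ σ)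
  else if σ ≤ θ then
    min (K ^ (ir σ - ir θ)) (K ^ (ir σ - ir θ) * Wk ^ omegaE p q)
  else if p ≤ 2 ∧ θ ≤ 2 then
    min 1 W
  else if omegaE p q ≤ omegaE θ σ then
    min (min 1 (W ^ omegaE p q)) (M ^ (ir q - ir p) * Wm ^ omegaE θ σ)
  else
    min (min 1 (W ^ omegaE θ σ)) (K ^ (ir σ - ir θ) * Wk ^ omegaE p q)

/-- `Ψ₀ = inf_{α ∈ A} ν_α Φ(p_α, θ_α)`. -/
def Psi0 {A : Type*} (q σ : ℝ≥0∞) (m k n : ℕ) (p θ : A → ℝ≥0∞) (ν : A → ℝ) : ℝ≥0∞ :=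
  ⨅ a : A, ENNReal.ofReal (ν a) * Phi q σ m k n (p a) (θ a)

/-- `Ψ₁`: infimum over pairs `(α, β) ∈ N₁`, i.e. `p_α ≠ q` and
`1/q = (1−λ)/p_α + λ/p_β` for some `λ ∈ (0,1)`, of
`ν_α^{1−λ} ν_β^{λ} Φ(q, θ̂_{α,β})` where `1/θ̂_{α,β} = (1−λ)/θ_α + λ/θ_β`. -/
def Psi1 {A : Type*} (q σ : ℝ≥0∞) (m k n : ℕ) (p θ : A → ℝ≥0∞) (ν : A → ℝ) : ℝ≥0∞ :=
  ⨅ (a : A) (b : A) (lam : ℝ)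
    (_ : 0 < lam ∧ lam < 1 ∧ p a ≠ q ∧
      ir q = (1 - lam) * ir (p a) + lam * ir (p b)),
    ENNReal.ofReal (ν a) ^ (1 - lam) * ENNReal.ofReal (ν b) ^ lam *
      Phi q σ m k n q (expOf ((1 - lam) * ir (θ a) + lam * ir (θ b)))

/-- `Ψ₂`: infimum over `(α, β) ∈ N₂` of `ν_α^{1−μ} ν_β^{μ} Φ(p̂_{α,β}, σ)`. -/
def Psi2 {A : Type*} (q σ : ℝ≥0∞) (m k n : ℕ) (p θ : A → ℝ≥0∞) (ν : A → ℝ) : ℝ≥0∞ :=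
  ⨅ (a : A) (b : A) (lam : ℝ)
    (_ : 0 < lam ∧ lam < 1 ∧ θ a ≠ σ ∧
      ir σ = (1 - lam) * ir (θ a) + lam * ir (θ b)),
    ENNReal.ofReal (ν a) ^ (1 - lam) * ENNReal.ofReal (ν b) ^ lam *
      Phi q σ m k n (expOf ((1 - lam) * ir (p a) + lam * ir (p b))) σ

/-- `Ψ₃`: infimum over `(α, β) ∈ N₃` of `ν_α^{1−λ} ν_β^{λ} Φ(2, θ̃_{α,β})`. -/
def Psi3 {A : Type*} (q σ : ℝ≥0∞) (m k n : ℕ) (p θ : A → ℝ≥0∞) (ν : A → ℝ) : ℝ≥0∞ :=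
  ⨅ (a : A) (b : A) (lam : ℝ)
    (_ : 0 < lam ∧ lam < 1 ∧ p a ≠ 2 ∧
      (1 : ℝ) / 2 = (1 - lam) * ir (p a) + lam * ir (p b)),
    ENNReal.ofReal (ν a) ^ (1 - lam) * ENNReal.ofReal (ν b) ^ lam *
      Phi q σ m k n 2 (expOf ((1 - lam) * ir (θ a) + lam * ir (θ b)))

/-- `Ψ₄`: infimum over `(α, β) ∈ N₄` of `ν_α^{1−μ} ν_β^{μ} Φ(p̃_{α,β}, 2)`. -/
def Psi4 {A : Type*} (q σ : ℝ≥0∞) (m k n : ℕ) (p θ : A → ℝ≥0∞) (ν : A → ℝ) : ℝ≥0∞ :=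
  ⨅ (a : A) (b : A) (lam : ℝ)
    (_ : 0 < lam ∧ lam < 1 ∧ θ a ≠ 2 ∧
      (1 : ℝ) / 2 = (1 - lam) * ir (θ a) + lam * ir (θ b)),
    ENNReal.ofReal (ν a) ^ (1 - lam) * ENNReal.ofReal (ν b) ^ lam *
      Phi q σ m k n (expOf ((1 - lam) * ir (p a) + lam * ir (p b))) 2

/-- `Ψ₅`: infimum over `(α, β) ∈ N₅`, i.e. such that for some `λ ∈ (0,1)` the
interpolated exponents satisfy `p_{α,β} ∈ (2,q)`, `θ_{α,β} ∈ (2,σ)`, lie on the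
"critical line", while `(1/p_α, 1/θ_α)` does not, of
`ν_α^{1−λ} ν_β^{λ} Φ(p_{α,β}, θ_{α,β})`. -/
def Psi5 {A : Type*} (q σ : ℝ≥0∞) (m k n : ℕ) (p θ : A → ℝ≥0∞) (ν : A → ℝ) : ℝ≥0∞ :=
  ⨅ (a : A) (b : A) (lam : ℝ)
    (_ : 0 < lam ∧ lam < 1 ∧
      ir q < (1 - lam) * ir (p a) + lam * ir (p b) ∧
      (1 - lam) * ir (p a) + lam * ir (p b) < 1 / 2 ∧
      ir σ < (1 - lam) * ir (θ a) + lam * ir (θ b) ∧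
      (1 - lam) * ir (θ a) + lam * ir (θ b) < 1 / 2 ∧
      ((1 - lam) * ir (p a) + lam * ir (p b) - ir q) / (1 / 2 - ir q) =
        ((1 - lam) * ir (θ a) + lam * ir (θ b) - ir σ) / (1 / 2 - ir σ) ∧
      (ir (p a) - ir q) / (1 / 2 - ir q) ≠ (ir (θ a) - ir σ) / (1 / 2 - ir σ)),
    ENNReal.ofReal (ν a) ^ (1 - lam) * ENNReal.ofReal (ν b) ^ lam *
      Phi q σ m k n (expOf ((1 - lam) * ir (p a) + lam * ir (p b)))
        (expOf ((1 - lam) * ir (θ a) + lam * ir (θ b)))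

/-- `Ψ₆`: infimum over triples `(α, β, γ) ∈ N₆` (with positive weights `τ` summing to `1`
interpolating `(1/q, 1/σ)`, the three points not collinear) of
`ν_α^{τ_α} ν_β^{τ_β} ν_γ^{τ_γ} Φ(q, σ)`. -/
def Psi6 {A : Type*} (q σ : ℝ≥0∞) (m k n : ℕ) (p θ : A → ℝ≥0∞) (ν : A → ℝ) : ℝ≥0∞ :=
  ⨅ (a : A) (b : A) (c : A) (ta : ℝ) (tb : ℝ) (tc : ℝ)
    (_ : 0 < ta ∧ 0 < tb ∧ 0 < tc ∧ ta + tb + tc = 1 ∧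
      ir q = ta * ir (p a) + tb * ir (p b) + tc * ir (p c) ∧
      ir σ = ta * ir (θ a) + tb * ir (θ b) + tc * ir (θ c) ∧
      (ir (p b) - ir (p a)) * (ir (θ c) - ir (θ a)) ≠
        (ir (p c) - ir (p a)) * (ir (θ b) - ir (θ a))),
    ENNReal.ofReal (ν a) ^ ta * ENNReal.ofReal (ν b) ^ tb * ENNReal.ofReal (ν c) ^ tc *
      Phi q σ m k n q σ

/-- `Ψ₇`: as `Ψ₆`, with `(1/2, 1/2)` in place of `(1/q, 1/σ)`. -/
def Psi7 {A : Type*} (q σ : ℝ≥0∞) (m k n : ℕ) (p θ : A → ℝ≥0∞) (ν : A → ℝ) : ℝ≥0∞ :=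
  ⨅ (a : A) (b : A) (c : A) (ta : ℝ) (tb : ℝ) (tc : ℝ)
    (_ : 0 < ta ∧ 0 < tb ∧ 0 < tc ∧ ta + tb + tc = 1 ∧
      (1 : ℝ) / 2 = ta * ir (p a) + tb * ir (p b) + tc * ir (p c) ∧
      (1 : ℝ) / 2 = ta * ir (θ a) + tb * ir (θ b) + tc * ir (θ c) ∧
      (ir (p b) - ir (p a)) * (ir (θ c) - ir (θ a)) ≠
        (ir (p c) - ir (p a)) * (ir (θ b) - ir (θ a))),
    ENNReal.ofReal (ν a) ^ ta * ENNReal.ofReal (ν b) ^ tb * ENNReal.ofReal (ν c) ^ tc *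
      Phi q σ m k n 2 2

/-- `min_{0 ≤ j ≤ 7} Ψ_j`. -/
def PsiMin {A : Type*} (q σ : ℝ≥0∞) (m k n : ℕ) (p θ : A → ℝ≥0∞) (ν : A → ℝ) : ℝ≥0∞ :=
  Psi0 q σ m k n p θ ν ⊓ Psi1 q σ m k n p θ ν ⊓ Psi2 q σ m k n p θ ν ⊓
    Psi3 q σ m k n p θ ν ⊓ Psi4 q σ m k n p θ ν ⊓ Psi5 q σ m k n p θ ν ⊓
    Psi6 q σ m k n p θ ν ⊓ Psi7 q σ m k n p θ ν

/-- The set `V^{m,k}_{r,l}`: the convex hull of all `γ(e)`, where `e` is the 0/1 matrix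
supported on the first `r` rows and first `l` columns and `γ` ranges over all
permutations of rows/columns composed with sign changes of rows/columns. -/
def Vset (m k r l : ℕ) : Set (Fin m → Fin k → ℝ) :=
  convexHull ℝ {y | ∃ (t₁ : Equiv.Perm (Fin m)) (t₂ : Equiv.Perm (Fin k))
      (e₁ : Fin m → ℝ) (e₂ : Fin k → ℝ),
    (∀ i, e₁ i = 1 ∨ e₁ i = -1) ∧ (∀ j, e₂ j = 1 ∨ e₂ j = -1) ∧
    y = fun i j => e₁ i * e₂ j * (if (t₁ i : ℕ) < r ∧ (t₂ j : ℕ) < l then 1 else 0)}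


/-! ### Auxiliary lemmas for `statement13` -/

section auxNorm
variable {ι : Type*} [Fintype ι] [Nonempty ι]

private lemma bdd_abs' (x : ι → ℝ) : BddAbove (Set.range fun i => |x i|) :=
  (Set.finite_range _).bddAbove

omit [Nonempty ι] in
private lemma sum_rpow_nonneg (x : ι → ℝ) (r : ℝ) : 0 ≤ ∑ i, |x i| ^ r :=
  Finset.sum_nonneg fun i _ => Real.rpow_nonneg (abs_nonneg _) _

lemma lNorm_nonneg (s : ℝ≥0∞) (x : ι → ℝ) : 0 ≤ lNorm s x := by
  unfold lNorm
  split_ifs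
  · exact le_ciSup_of_le (bdd_abs' x) (Classical.arbitrary ι) (abs_nonneg _)
  · exact Real.rpow_nonneg (sum_rpow_nonneg x _) _

lemma lNorm_smul {s : ℝ≥0∞} (hs : s = ∞ ∨ 0 < s.toReal) (c : ℝ) (x : ι → ℝ) :
    lNorm s (fun i => c * x i) = |c| * lNorm s x := by
  unfold lNorm
  rcases hs with rfl | hs
  · simp only [if_pos rfl, abs_mul]
    exact (Real.mul_iSup_of_nonneg (abs_nonneg c) _).symm
  · have hsne : s ≠ ∞ := by rintro rfl; simp at hs
    rw [if_neg hsne, if_neg hsne]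
    simp_rw [abs_mul, Real.mul_rpow (abs_nonneg c) (abs_nonneg _), ← Finset.mul_sum]
    rw [Real.mul_rpow (Real.rpow_nonneg (abs_nonneg c) _) (sum_rpow_nonneg x _),
      ← Real.rpow_mul (abs_nonneg c), mul_one_div_cancel hs.ne', Real.rpow_one]

lemma lNorm_mono (s : ℝ≥0∞) {x y : ι → ℝ} (h : ∀ i, |x i| ≤ |y i|) :
    lNorm s x ≤ lNorm s y := by
  unfold lNorm
  split_ifs
  · exact ciSup_le fun i => (h i).trans (le_ciSup (bdd_abs' y) i)
  · exact Real.rpow_le_rpow (sum_rpow_nonneg x _)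
      (Finset.sum_le_sum fun i _ =>
        Real.rpow_le_rpow (abs_nonneg _) (h i) ENNReal.toReal_nonneg)
      (by positivity)

omit [Nonempty ι] in
lemma sum_rpow_mono {x : ι → ℝ} {a b : ℝ} (ha : 0 < a) (hab : a ≤ b) :
    (∑ i, |x i| ^ b) ^ (1 / b) ≤ (∑ i, |x i| ^ a) ^ (1 / a) := by
  have hb : 0 < b := ha.trans_le hab
  set S : ℝ := (∑ i, |x i| ^ a) ^ (1 / a) with hSdef
  have hS : 0 ≤ S := Real.rpow_nonneg (sum_rpow_nonneg x _) _
  have hSa : S ^ a = ∑ i, |x i| ^ a := by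
    rw [hSdef, ← Real.rpow_mul (sum_rpow_nonneg x _),
      one_div_mul_cancel ha.ne', Real.rpow_one]
  have hterm : ∀ i, |x i| ≤ S := by
    intro i
    have h1 : |x i| ^ a ≤ ∑ j, |x j| ^ a :=
      Finset.single_le_sum (fun j _ => Real.rpow_nonneg (abs_nonneg _) _) (Finset.mem_univ i)
    have := Real.rpow_le_rpow (Real.rpow_nonneg (abs_nonneg _) _) h1
      (by positivity : (0:ℝ) ≤ 1/a)
    rwa [← Real.rpow_mul (abs_nonneg _), mul_one_div_cancel ha.ne', Real.rpow_one] at this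
  have hsum : ∑ i, |x i| ^ b ≤ S ^ b := by
    have key : ∀ i, |x i| ^ b ≤ |x i| ^ a * S ^ (b - a) := by
      intro i
      have : |x i| ^ b = |x i| ^ a * |x i| ^ (b - a) := by
        rw [← Real.rpow_add' (abs_nonneg _) (by linarith)]
        ring_nf
      rw [this]
      exact mul_le_mul_of_nonneg_left
        (Real.rpow_le_rpow (abs_nonneg _) (hterm i) (by linarith))
        (Real.rpow_nonneg (abs_nonneg _) _)
    calc ∑ i, |x i| ^ b ≤ ∑ i, |x i| ^ a * S ^ (b - a) := Finset.sum_le_sum fun i _ => key i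
      _ = (∑ i, |x i| ^ a) * S ^ (b - a) := by rw [← Finset.sum_mul]
      _ = S ^ a * S ^ (b - a) := by rw [hSa]
      _ = S ^ b := by rw [← Real.rpow_add' hS (by linarith)]; ring_nf
  calc (∑ i, |x i| ^ b) ^ (1 / b)
      ≤ (S ^ b) ^ (1 / b) := Real.rpow_le_rpow (sum_rpow_nonneg x _) hsum (by positivity)
    _ = S := by rw [← Real.rpow_mul hS, mul_one_div_cancel hb.ne', Real.rpow_one]

omit [Nonempty ι] in
lemma sum_rpow_holder {x : ι → ℝ} {a b : ℝ} (ha : 0 < a) (hab : a < b) :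
    (∑ i, |x i| ^ a) ^ (1 / a) ≤
      (Fintype.card ι : ℝ) ^ (1 / a - 1 / b) * (∑ i, |x i| ^ b) ^ (1 / b) := by
  have hb : 0 < b := ha.trans hab
  have hP : 1 < b / a := (one_lt_div ha).2 hab
  have hpq := Real.HolderConjugate.conjExponent hP
  have h := Real.inner_le_Lp_mul_Lq_of_nonneg Finset.univ hpq
    (f := fun i => |x i| ^ a) (g := fun _ => (1:ℝ))
    (fun i _ => Real.rpow_nonneg (abs_nonneg _) _) (fun i _ => zero_le_one)
  simp only [mul_one, Real.one_rpow, Finset.sum_const, Finset.card_univ, nsmul_eq_mul] at h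
  have hpow : ∀ i, (|x i| ^ a) ^ (b / a) = |x i| ^ b := by
    intro i
    rw [← Real.rpow_mul (abs_nonneg _)]
    congr 1
    field_simp
  simp only [hpow] at h
  have hsum_b : 0 ≤ ∑ i, |x i| ^ b := sum_rpow_nonneg x _
  have hN : (0:ℝ) ≤ (Fintype.card ι : ℝ) := Nat.cast_nonneg _
  calc (∑ i, |x i| ^ a) ^ (1 / a)
      ≤ ((∑ i, |x i| ^ b) ^ (1 / (b/a)) *
          ((Fintype.card ι : ℝ)) ^ (1 / Real.conjExponent (b/a))) ^ (1/a) :=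
        Real.rpow_le_rpow (sum_rpow_nonneg x _) h (by positivity)
      _ = (Fintype.card ι : ℝ) ^ (1 / a - 1 / b) * (∑ i, |x i| ^ b) ^ (1 / b) := by
        rw [Real.mul_rpow (Real.rpow_nonneg hsum_b _) (Real.rpow_nonneg hN _),
          ← Real.rpow_mul hsum_b, ← Real.rpow_mul hN, mul_comm]
        congr 1
        · congr 1
          have h1 : Real.conjExponent (b/a) = (b/a) / (b/a - 1) := rfl
          rw [h1]
          field_simp
        · congr 1
          field_simp

lemma ir_of_ne_top {s : ℝ≥0∞} (hs : s ≠ ∞) : ir s = 1 / s.toReal := by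
  rw [ir, ENNReal.toReal_inv, one_div]

lemma toReal_pos_of_one_le {s : ℝ≥0∞} (h1 : 1 ≤ s) (hs : s ≠ ∞) : 0 < s.toReal :=
  ENNReal.toReal_pos (by rintro rfl; exact absurd h1 (by simp)) hs

lemma one_le_cases {s : ℝ≥0∞} (h1 : 1 ≤ s) : s = ∞ ∨ 0 < s.toReal := by
  rcases eq_or_ne s ∞ with h | h
  · exact Or.inl h
  · exact Or.inr (toReal_pos_of_one_le h1 h)

lemma lNorm_exp_compare {s t : ℝ≥0∞} (hs : 1 ≤ s) (ht : 1 ≤ t) (x : ι → ℝ) :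
    lNorm t x ≤ (Fintype.card ι : ℝ) ^ (max (ir t - ir s) 0) * lNorm s x := by
  have hcard : (0:ℝ) < (Fintype.card ι : ℝ) := by exact_mod_cast Fintype.card_pos
  by_cases ht' : t = ∞
  · by_cases hs' : s = ∞
    · subst ht' hs'
      simp [ir, lNorm]
    · subst ht'
      have hb : 0 < s.toReal := toReal_pos_of_one_le hs hs'
      have hirs : 0 ≤ ir s := by rw [ir_of_ne_top hs']; positivity
      have h0 : ir (⊤:ℝ≥0∞) = 0 := by simp [ir]
      rw [max_eq_right (by rw [h0]; simp only [zero_sub, neg_nonpos]; exact hirs),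
        Real.rpow_zero, one_mul]
      unfold lNorm
      rw [if_pos rfl, if_neg hs']
      refine ciSup_le fun i => ?_
      have h1 : |x i| ^ s.toReal ≤ ∑ j, |x j| ^ s.toReal :=
        Finset.single_le_sum (fun j _ => Real.rpow_nonneg (abs_nonneg _) _) (Finset.mem_univ i)
      have := Real.rpow_le_rpow (Real.rpow_nonneg (abs_nonneg _) _) h1
        (by positivity : (0:ℝ) ≤ 1 / s.toReal)
      rwa [← Real.rpow_mul (abs_nonneg _), mul_one_div_cancel hb.ne', Real.rpow_one] at this
  · have ha : 0 < t.toReal := toReal_pos_of_one_le ht ht'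
    by_cases hs' : s = ∞
    · subst hs'
      have hirt : ir t = 1 / t.toReal := ir_of_ne_top ht'
      have h0 : ir (⊤:ℝ≥0∞) = 0 := by simp [ir]
      rw [max_eq_left (by rw [hirt, h0, sub_zero]; positivity), hirt, h0, sub_zero]
      unfold lNorm
      rw [if_neg ht', if_pos rfl]
      set Sup := ⨆ i, |x i| with hSup
      have hSupnn : 0 ≤ Sup :=
        le_ciSup_of_le (bdd_abs' x) (Classical.arbitrary ι) (abs_nonneg _)
      have hsum : ∑ i, |x i| ^ t.toReal ≤ (Fintype.card ι : ℝ) * Sup ^ t.toReal := by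
        calc ∑ i, |x i| ^ t.toReal ≤ ∑ _i : ι, Sup ^ t.toReal :=
              Finset.sum_le_sum fun i _ => Real.rpow_le_rpow (abs_nonneg _)
                (le_ciSup (bdd_abs' x) i) ha.le
          _ = (Fintype.card ι : ℝ) * Sup ^ t.toReal := by
              rw [Finset.sum_const, Finset.card_univ, nsmul_eq_mul]
      calc (∑ i, |x i| ^ t.toReal) ^ (1 / t.toReal)
          ≤ ((Fintype.card ι : ℝ) * Sup ^ t.toReal) ^ (1 / t.toReal) :=
            Real.rpow_le_rpow (sum_rpow_nonneg x _) hsum (by positivity)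
        _ = (Fintype.card ι : ℝ) ^ (1 / t.toReal) * Sup := by
            rw [Real.mul_rpow hcard.le (Real.rpow_nonneg hSupnn _),
              ← Real.rpow_mul hSupnn, mul_one_div_cancel ha.ne', Real.rpow_one]
    · have hb : 0 < s.toReal := toReal_pos_of_one_le hs hs'
      have hirt : ir t = 1 / t.toReal := ir_of_ne_top ht'
      have hirs : ir s = 1 / s.toReal := ir_of_ne_top hs'
      unfold lNorm
      rw [if_neg ht', if_neg hs']
      rcases le_or_gt s.toReal t.toReal with hle | hlt
      · rw [max_eq_right (by rw [hirt, hirs, sub_nonpos]; gcongr), Real.rpow_zero, one_mul]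
        exact sum_rpow_mono hb hle
      · rw [max_eq_left (by rw [hirt, hirs, sub_nonneg]; gcongr), hirt, hirs]
        exact sum_rpow_holder ha hlt

end auxNorm

section mixedAux
variable {m k : ℕ}

lemma mixedNorm_nonneg [NeZero m] [NeZero k] (p θ : ℝ≥0∞) (x : Fin m → Fin k → ℝ) :
    0 ≤ mixedNorm p θ x :=
  lNorm_nonneg θ _

lemma mixedNorm_smul [NeZero m] [NeZero k] {p θ : ℝ≥0∞} (hp : 1 ≤ p) (hθ : 1 ≤ θ)
    (c : ℝ) (x : Fin m → Fin k → ℝ) :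
    mixedNorm p θ (c • x) = |c| * mixedNorm p θ x := by
  unfold mixedNorm
  have h1 : (fun j => lNorm p fun i => (c • x) i j) =
      fun j => |c| * lNorm p fun i => x i j := by
    funext j
    exact lNorm_smul (one_le_cases hp) c _
  rw [h1]
  exact lNorm_smul (one_le_cases hθ) |c| _ |>.trans (by rw [abs_abs])

lemma mixedNorm_compare [NeZero m] [NeZero k] {p θ p' θ' : ℝ≥0∞}
    (hp : 1 ≤ p) (hθ : 1 ≤ θ) (hp' : 1 ≤ p') (hθ' : 1 ≤ θ') (x : Fin m → Fin k → ℝ) :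
    mixedNorm p' θ' x ≤
      (m : ℝ) ^ (max (ir p' - ir p) 0) * (k : ℝ) ^ (max (ir θ' - ir θ) 0) *
        mixedNorm p θ x := by
  set Cm : ℝ := (m : ℝ) ^ (max (ir p' - ir p) 0) with hCm
  set Ck : ℝ := (k : ℝ) ^ (max (ir θ' - ir θ) 0) with hCk
  have hCmnn : 0 ≤ Cm := Real.rpow_nonneg (Nat.cast_nonneg _) _
  have hCknn : 0 ≤ Ck := Real.rpow_nonneg (Nat.cast_nonneg _) _
  have hinner : ∀ j, lNorm p' (fun i => x i j) ≤ Cm * lNorm p (fun i => x i j) := by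
    intro j
    have := lNorm_exp_compare hp hp' (fun i => x i j)
    rwa [Fintype.card_fin] at this
  calc mixedNorm p' θ' x
      ≤ lNorm θ' (fun j => Cm * lNorm p fun i => x i j) := by
        apply lNorm_mono
        intro j
        rw [abs_of_nonneg (lNorm_nonneg _ _),
          abs_of_nonneg (mul_nonneg hCmnn (lNorm_nonneg _ _))]
        exact hinner j
    _ = Cm * lNorm θ' (fun j => lNorm p fun i => x i j) := by
        rw [lNorm_smul (one_le_cases hθ') Cm, abs_of_nonneg hCmnn]
    _ ≤ Cm * (Ck * mixedNorm p θ x) := by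
        apply mul_le_mul_of_nonneg_left _ hCmnn
        have := lNorm_exp_compare hθ hθ' (fun j => lNorm p fun i => x i j)
        rwa [Fintype.card_fin] at this
    _ = Cm * Ck * mixedNorm p θ x := by ring

lemma factor_le_two {m k : ℕ} (hm : 1 ≤ m) (hk : 1 ≤ k) (hmk : 2 ≤ m * k) {a b : ℝ}
    (ha0 : 0 ≤ a) (hb0 : 0 ≤ b)
    (ha : a ≤ Real.log 2 / Real.log ((m : ℝ) * k))
    (hb : b ≤ Real.log 2 / Real.log ((m : ℝ) * k)) :
    (m : ℝ) ^ a * (k : ℝ) ^ b ≤ 2 := by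
  set ε := Real.log 2 / Real.log ((m : ℝ) * k) with hε
  have hmk2 : (2 : ℝ) ≤ (m : ℝ) * k := by exact_mod_cast hmk
  have hlog : 0 < Real.log ((m : ℝ) * k) := Real.log_pos (by linarith)
  have hm1 : (1 : ℝ) ≤ (m : ℝ) := by exact_mod_cast hm
  have hk1 : (1 : ℝ) ≤ (k : ℝ) := by exact_mod_cast hk
  have h1 : (m : ℝ) ^ a ≤ (m : ℝ) ^ ε := Real.rpow_le_rpow_of_exponent_le hm1 ha
  have h2 : (k : ℝ) ^ b ≤ (k : ℝ) ^ ε := Real.rpow_le_rpow_of_exponent_le hk1 hb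
  have h3 : (m : ℝ) ^ ε * (k : ℝ) ^ ε = ((m : ℝ) * k) ^ ε :=
    (Real.mul_rpow (by linarith) (by linarith)).symm
  have h4 : ((m : ℝ) * k) ^ ε = 2 := by
    rw [Real.rpow_def_of_pos (by linarith), hε, mul_div_cancel₀ _ hlog.ne',
      Real.exp_log two_pos]
  calc (m : ℝ) ^ a * (k : ℝ) ^ b ≤ (m : ℝ) ^ ε * (k : ℝ) ^ ε := by
        apply mul_le_mul h1 h2 (Real.rpow_nonneg (by linarith) _) (Real.rpow_nonneg (by linarith) _)
    _ = 2 := by rw [h3, h4]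

lemma mixedNorm_le_two_mul {m k : ℕ} (hmk : 2 ≤ m * k) {p θ p' θ' : ℝ≥0∞}
    (hp : 1 ≤ p) (hθ : 1 ≤ θ) (hp' : 1 ≤ p') (hθ' : 1 ≤ θ')
    (hclosep : |ir p - ir p'| < Real.log 2 / Real.log ((m : ℝ) * k))
    (hcloseθ : |ir θ - ir θ'| < Real.log 2 / Real.log ((m : ℝ) * k))
    (x : Fin m → Fin k → ℝ) :
    mixedNorm p' θ' x ≤ 2 * mixedNorm p θ x := by
  have hm : 1 ≤ m := Nat.one_le_iff_ne_zero.2 fun h => by simp [h] at hmk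
  have hk : 1 ≤ k := Nat.one_le_iff_ne_zero.2 fun h => by simp [h] at hmk
  haveI : NeZero m := ⟨by omega⟩
  haveI : NeZero k := ⟨by omega⟩
  have ha0 : (0:ℝ) ≤ max (ir p' - ir p) 0 := le_max_right _ _
  have hb0 : (0:ℝ) ≤ max (ir θ' - ir θ) 0 := le_max_right _ _
  have ha : max (ir p' - ir p) 0 ≤ Real.log 2 / Real.log ((m : ℝ) * k) := by
    have h1 : ir p' - ir p ≤ |ir p - ir p'| := by
      rw [abs_sub_comm]; exact le_abs_self _
    exact max_le (h1.trans hclosep.le) ((abs_nonneg _).trans hclosep.le)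
  have hb : max (ir θ' - ir θ) 0 ≤ Real.log 2 / Real.log ((m : ℝ) * k) := by
    have h1 : ir θ' - ir θ ≤ |ir θ - ir θ'| := by
      rw [abs_sub_comm]; exact le_abs_self _
    exact max_le (h1.trans hcloseθ.le) ((abs_nonneg _).trans hcloseθ.le)
  calc mixedNorm p' θ' x
      ≤ (m : ℝ) ^ (max (ir p' - ir p) 0) * (k : ℝ) ^ (max (ir θ' - ir θ) 0) *
          mixedNorm p θ x := mixedNorm_compare hp hθ hp' hθ' x
    _ ≤ 2 * mixedNorm p θ x :=
        mul_le_mul_of_nonneg_right (factor_le_two hm hk hmk ha0 hb0 ha hb)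
          (mixedNorm_nonneg _ _ _)

lemma mem_smul_mixedBall_iff {m k : ℕ} [NeZero m] [NeZero k] {p θ : ℝ≥0∞}
    (hp : 1 ≤ p) (hθ : 1 ≤ θ) {ν : ℝ} (hν : 0 < ν) (x : Fin m → Fin k → ℝ) :
    x ∈ ν • mixedBall m k p θ ↔ mixedNorm p θ x ≤ ν := by
  constructor
  · rintro ⟨y, hy, rfl⟩
    rw [mixedNorm_smul hp hθ, abs_of_pos hν]
    calc ν * mixedNorm p θ y ≤ ν * 1 := mul_le_mul_of_nonneg_left hy hν.le
      _ = ν := mul_one ν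
  · intro h
    refine ⟨ν⁻¹ • x, ?_, (smul_inv_smul₀ hν.ne' x)⟩
    show mixedNorm p θ (ν⁻¹ • x) ≤ 1
    rw [mixedNorm_smul hp hθ, abs_of_pos (inv_pos.2 hν)]
    rw [inv_mul_le_iff₀ hν, mul_one]
    exact h

end mixedAux

/-- **Stability of the intersection under small perturbation of the exponents.**
If `mk ≥ 2` and `|1/p_α − 1/p̃_α| < log 2 / log(mk)`,
`|1/θ_α − 1/θ̃_α| < log 2 / log(mk)` for all `α`, then with
`M = ⋂_α ν_α B^{m,k}_{p_α,θ_α}` and `M̃ = ⋂_α ν_α B^{m,k}_{p̃_α,θ̃_α}` one has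
`(1/2) M ⊆ M̃ ⊆ 2 M`. -/
theorem statement13 (m k : ℕ) (hmk : 2 ≤ m * k) (A : Type*) [Nonempty A]
    (ν : A → ℝ) (hν : ∀ a, 0 < ν a)
    (p θ p' θ' : A → ℝ≥0∞)
    (hp : ∀ a, 1 ≤ p a) (hθ : ∀ a, 1 ≤ θ a)
    (hp' : ∀ a, 1 ≤ p' a) (hθ' : ∀ a, 1 ≤ θ' a)
    (hclosep : ∀ a, |ir (p a) - ir (p' a)| < Real.log 2 / Real.log ((m : ℝ) * k))
    (hcloseθ : ∀ a, |ir (θ a) - ir (θ' a)| < Real.log 2 / Real.log ((m : ℝ) * k)) :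
    ((1 / 2 : ℝ) • ⋂ a : A, ν a • mixedBall m k (p a) (θ a)) ⊆
        (⋂ a : A, ν a • mixedBall m k (p' a) (θ' a)) ∧
      (⋂ a : A, ν a • mixedBall m k (p' a) (θ' a)) ⊆
        (2 : ℝ) • ⋂ a : A, ν a • mixedBall m k (p a) (θ a) := by
  haveI : NeZero m := ⟨fun h => by simp [h] at hmk⟩
  haveI : NeZero k := ⟨fun h => by simp [h] at hmk⟩
  constructor
  · intro x hx
    rw [Set.mem_smul_set_iff_inv_smul_mem₀ (by norm_num : (1/2 : ℝ) ≠ 0),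
      Set.mem_iInter] at hx
    refine Set.mem_iInter.2 fun a => ?_
    have hxa := hx a
    rw [mem_smul_mixedBall_iff (hp a) (hθ a) (hν a),
      mixedNorm_smul (hp a) (hθ a)] at hxa
    rw [mem_smul_mixedBall_iff (hp' a) (hθ' a) (hν a)]
    have hkey := mixedNorm_le_two_mul hmk (hp a) (hθ a) (hp' a) (hθ' a)
      (hclosep a) (hcloseθ a) x
    have habs : |(1/2 : ℝ)⁻¹| = 2 := by norm_num
    rw [habs] at hxa
    linarith
  · intro x hx
    rw [Set.mem_iInter] at hx
    rw [Set.mem_smul_set_iff_inv_smul_mem₀ (by norm_num : (2 : ℝ) ≠ 0)]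
    refine Set.mem_iInter.2 fun a => ?_
    have hxa := hx a
    rw [mem_smul_mixedBall_iff (hp' a) (hθ' a) (hν a)] at hxa
    rw [mem_smul_mixedBall_iff (hp a) (hθ a) (hν a),
      mixedNorm_smul (hp a) (hθ a)]
    have hkey := mixedNorm_le_two_mul hmk (hp' a) (hθ' a) (hp a) (hθ a)
      (by rw [abs_sub_comm]; exact hclosep a) (by rw [abs_sub_comm]; exact hcloseθ a) x
    have habs : |(2 : ℝ)⁻¹| = 1/2 := by norm_num
    rw [habs]
    linarith

end
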